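/- Let Γ be an irreducible subgroup of Homeo₊(I) such that every non-identity element of Γ has finitely many fixed points in (0,1), and let N be a non-trivial Abelian normal subgroup of Γ. Then every non-identity element of N acts freely on (0,1): Fix(g) = ∅ for all g ∈ N \ {1}. -/

import Mathlib

noncomputable section

/-- The unit interval `[0,1] ⊆ ℝ`. -/
abbrev unitI : Set ℝ := Set.Icc (0:ℝ) 1

/-- Ambient group: bijections of the unit interval. -/
abbrev IntervalMap : Type := Equiv.Perm ↥unitI

/-- The extension of `σ` to `ℝ`, by the identity outside `[0,1]`. -/
def toReal (σ : IntervalMap) : ℝ → ℝ :=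
  fun x => if h : x ∈ unitI then (σ ⟨x, h⟩ : ℝ) else x

/-- `σ` is an orientation-preserving homeomorphism of `[0,1]` (a strictly
increasing bijection of `[0,1]`; such a map automatically fixes `0` and `1`
and is continuous). -/
def IsOPH (σ : IntervalMap) : Prop := StrictMono fun x : ↥unitI => (σ x : ℝ)

/-- `σ` extends to a `C¹` function on `[0,1]`. -/
def IsC1On (σ : IntervalMap) : Prop := ContDiffOn ℝ 1 (toReal σ) unitI

/-- `σ` is an orientation-preserving `C¹` diffeomorphism of `[0,1]`. -/
def IsOPD (σ : IntervalMap) : Prop := IsOPH σ ∧ IsC1On σ ∧ IsC1On σ⁻¹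

/-- `Γ` is a subgroup of `Diff₊(I)`. -/
def DiffSubgroup (Γ : Subgroup IntervalMap) : Prop := ∀ γ ∈ Γ, IsOPD γ

/-- `Γ` is a subgroup of `Homeo₊(I)`. -/
def HomeoSubgroup (Γ : Subgroup IntervalMap) : Prop := ∀ γ ∈ Γ, IsOPH γ

/-- The set of fixed points of `σ` in the open interval `(0,1)`. -/
def FixPts (σ : IntervalMap) : Set ↥unitI :=
  {x : ↥unitI | σ x = x ∧ 0 < (x : ℝ) ∧ (x : ℝ) < 1}

/-- Every non-identity element of `Γ` has finitely many fixed points in `(0,1)`. -/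
def FinFix (Γ : Subgroup IntervalMap) : Prop := ∀ γ ∈ Γ, γ ≠ 1 → (FixPts γ).Finite

/-- The `C⁰`-norm `‖σ‖ = sup_{x ∈ [0,1]} |σ(x) - x|`. -/
def C0norm (σ : IntervalMap) : ℝ := ⨆ x : ↥unitI, |(σ x : ℝ) - (x : ℝ)|

/-- `Γ` is locally transitive. -/
def LocTrans (Γ : Subgroup IntervalMap) : Prop :=
  ∀ p : ↥unitI, 0 < (p : ℝ) → (p : ℝ) < 1 → ∀ ε : ℝ, 0 < ε →
    ∃ γ ∈ Γ, C0norm γ < ε ∧ γ p ≠ p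

/-- `Γ` is irreducible: no global fixed point in `(0,1)`. -/
def Irred (Γ : Subgroup IntervalMap) : Prop :=
  ¬ ∃ p : ↥unitI, 0 < (p : ℝ) ∧ (p : ℝ) < 1 ∧ ∀ γ ∈ Γ, γ p = p

/-- The group `Aff₊(ℝ)` of orientation-preserving affine maps `x ↦ a x + b`,
`a > 0`, as a subgroup of the permutation group of `ℝ`. -/
def AffPlus : Subgroup (Equiv.Perm ℝ) where
  carrier := {e | ∃ a b : ℝ, 0 < a ∧ ∀ x, e x = a * x + b}
  one_mem' := ⟨1, 0, one_pos, fun x => by simp⟩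
  mul_mem' := by
    rintro e f ⟨a, b, ha, he⟩ ⟨c, d, hc, hf⟩
    refine ⟨a * c, a * d + b, mul_pos ha hc, fun x => ?_⟩
    rw [Equiv.Perm.mul_apply, hf, he]; ring
  inv_mem' := by
    rintro e ⟨a, b, ha, he⟩
    refine ⟨a⁻¹, -b / a, by positivity, fun y => ?_⟩
    apply e.injective
    rw [show e (e⁻¹ y) = y from e.apply_symm_apply y, he]
    field_simp
    ring

/-- `G` embeds into (i.e. is isomorphic to a subgroup of) `Aff₊(ℝ)`. -/
def EmbedsInAff (G : Type*) [Group G] : Prop :=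
  ∃ φ : G →* ↥AffPlus, Function.Injective φ

/-- `G` embeds into `Aff₊(ℝ)ⁿ` for some `n ≥ 1`. -/
def EmbedsInAffPow (G : Type*) [Group G] : Prop :=
  ∃ n : ℕ, 1 ≤ n ∧ ∃ φ : G →* (Fin n → ↥AffPlus), Function.Injective φ

/-- `G` has infinite girth: for every `m` there is a finite generating set `S`
such that no non-trivial reduced word of length at most `m` in `S ∪ S⁻¹`
represents the identity. -/
def HasInfiniteGirth (G : Type*) [Group G] : Prop :=
  ∀ m : ℕ, ∃ S : Finset G, Subgroup.closure (S : Set G) = ⊤ ∧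
    ∀ w : FreeGroup {x // x ∈ S}, w ≠ 1 →
      (∃ l : List ({x // x ∈ S} × Bool), l.length ≤ m ∧ FreeGroup.mk l = w) →
      FreeGroup.lift (fun s => (s : G)) w ≠ 1

/-- `a` and `b` generate a free semigroup on two generators: distinct
non-empty positive words in `a, b` give distinct elements. -/
def FreeSemigroupPair {G : Type*} [Group G] (a b : G) : Prop :=
  Function.Injective
    ⇑(FreeSemigroup.lift (fun x : Bool => if x then a else b) : FreeSemigroup Bool →ₙ* G)

/-- `g < f` in the biorder: `g(x) < f(x)` near `0`. -/
def ltNear (g f : IntervalMap) : Prop :=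
  ∃ δ : ℝ, 0 < δ ∧ ∀ x : ↥unitI, 0 < (x : ℝ) → (x : ℝ) < δ → (g x : ℝ) < (f x : ℝ)

/-- `g ≤ f` in the biorder. -/
def leNear (g f : IntervalMap) : Prop := ltNear g f ∨ g = f

/-- `g << f`: `g` is infinitesimal with respect to `f`, i.e. `gⁿ < f` for all `n ∈ ℤ`. -/
def Infinitesimal (g f : IntervalMap) : Prop := ∀ n : ℤ, ltNear (g ^ n) f

/-- `(f, g)` is a crossed pair on the interval `(a,b)`: `f` fixes `a` and `b`
but no point strictly between them, while `g` maps `a` or `b` into `(a,b)`. -/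
def CrossedOn (f g : IntervalMap) (a b : ↥unitI) : Prop :=
  f a = a ∧ f b = b ∧ (∀ x : ↥unitI, (a : ℝ) < x → (x : ℝ) < b → f x ≠ x) ∧
  (((a : ℝ) < (g a : ℝ) ∧ (g a : ℝ) < b) ∨ ((a : ℝ) < (g b : ℝ) ∧ (g b : ℝ) < b))

/-- `(f, g)` is a crossed pair. -/
def CrossedPair (f g : IntervalMap) : Prop :=
  ∃ a b : ↥unitI, (a : ℝ) < b ∧ (CrossedOn f g a b ∨ CrossedOn g f a b)

/-- The auxiliary point configuration used in weak transitivity: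
`extPt γ p 0 = 0`, `extPt γ p j = γ(pⱼ)` for `1 ≤ j ≤ k` (here `pⱼ = p ⟨j-1⟩`
in `0`-indexed notation), and `extPt γ p (k+1) = 1`. -/
def extPt (γ : IntervalMap) {k : ℕ} (p : Fin k → ↥unitI) (j : ℕ) : ℝ :=
  if j = 0 then 0 else if h : j - 1 < k then (γ (p ⟨j - 1, h⟩) : ℝ) else 1

/-- `Γ` is weakly `k`-transitive. -/
def WeaklyKTrans (Γ : Subgroup IntervalMap) (k : ℕ) : Prop :=
  ∀ g ∈ Γ, ∀ p : Fin k → ↥unitI,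
    (∀ i, 0 < (p i : ℝ) ∧ (p i : ℝ) < 1) →
    (StrictMono fun i => (p i : ℝ)) →
    ∀ ε : ℝ, 0 < ε →
      ∃ γ ∈ Γ, extPt γ p k < ε ∧
        ∀ i : Fin k,
          extPt γ p i.val < (g (γ (p i)) : ℝ) ∧
            (g (γ (p i)) : ℝ) < extPt γ p (i.val + 2)

/-- `Γ` is weakly transitive. -/
def WeakTrans (Γ : Subgroup IntervalMap) : Prop := ∀ k : ℕ, 1 ≤ k → WeaklyKTrans Γ k

/-! Suppose `g ∈ N \ {1}` fixes some `p ∈ (0,1)`. Its fixed-point set `F` (endpoints included) is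
finite. An increasing map sending a finite set into itself fixes it pointwise; every element of `N`
commutes with `g`, hence maps `F` into `F` and fixes `F`. For `γ ∈ Γ` the conjugate `γ⁻¹ g γ` lies in
`N`, so it fixes `F`, i.e. `γ` maps `F` into `F`; thus `γ` fixes `F`, and `p` is a global fixed
point of `Γ`. -/

open Function Set

theorem StrictMono.eqOn_of_mapsTo {α : Type*} [LinearOrder α] {f : α → α} (hf : StrictMono f)
    {s : Set α} (hs : s.Finite) (hfs : MapsTo f s s) : EqOn f id s := by
  have : Finite s := hs
  let g : s → s := hfs.restrict
  have hg : StrictMono g := fun x y hxy => hf (Subtype.coe_lt_coe.mpr hxy)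
  intro x hx
  exact congrArg Subtype.val (le_antisymm (hg.apply_le (x := ⟨x, hx⟩)) hg.le_apply)

theorem StrictMono.eqOn_fixedPoints_of_commute {α : Type*} [LinearOrder α] {f g : α → α}
    (hf : StrictMono f) (hfg : Function.Commute f g) (hg : (fixedPoints g).Finite) :
    EqOn f id (fixedPoints g) :=
  hf.eqOn_of_mapsTo hg hfg.mapsTo_fixedPoints

theorem IsOPH.strictMono {σ : IntervalMap} (hσ : IsOPH σ) : StrictMono σ :=
  fun _ _ hxy => Subtype.coe_lt_coe.mp (hσ hxy)

theorem fixedPoints_subset_fixPts_union {σ : IntervalMap} :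
    fixedPoints σ ⊆ FixPts σ ∪ {⟨0, by simp⟩, ⟨1, by simp⟩} := by
  intro x hx
  rcases x.2.1.eq_or_lt with h0 | h0
  · exact Or.inr (Or.inl (Subtype.ext h0.symm))
  rcases x.2.2.eq_or_lt with h1 | h1
  · exact Or.inr (Or.inr (Subtype.ext h1))
  exact Or.inl ⟨hx, h0, h1⟩

theorem finite_fixedPoints_of_finite_fixPts {σ : IntervalMap} (h : (FixPts σ).Finite) :
    (fixedPoints σ).Finite :=
  (h.union (toFinite _)).subset fixedPoints_subset_fixPts_union

theorem stmt15_general (Γ : Subgroup IntervalMap) (hΓhomeo : HomeoSubgroup Γ)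
    (hΓfix : FinFix Γ) (hΓirr : Irred Γ)
    (N : Subgroup IntervalMap) (hNsub : N ≤ Γ)
    (hNab : ∀ a ∈ N, ∀ b ∈ N, a * b = b * a)
    (hNnorm : ∀ g ∈ Γ, ∀ n ∈ N, g * n * g⁻¹ ∈ N) :
    ∀ g ∈ N, g ≠ 1 → FixPts g = ∅ := by
  intro g hg hg1
  have hfin := finite_fixedPoints_of_finite_fixPts (hΓfix g (hNsub hg) hg1)
  have hfixN : ∀ n ∈ N, EqOn n id (fixedPoints g) := fun n hn =>
    (hΓhomeo n (hNsub hn)).strictMono.eqOn_fixedPoints_of_commute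
      (DFunLike.congr_fun (hNab n hn g hg)) hfin
  have hmaps : ∀ γ ∈ Γ, MapsTo γ (fixedPoints g) (fixedPoints g) := by
    intro γ hγ x hx
    have hconj : γ⁻¹ * g * γ ∈ N := by simpa using hNnorm γ⁻¹ (inv_mem hγ) g hg
    have hx' : (γ⁻¹ * g * γ) x = x := hfixN _ hconj hx
    show g (γ x) = γ x
    simpa using congrArg γ hx'
  refine eq_empty_of_forall_notMem fun p ⟨hp, hp0, hp1⟩ => hΓirr ⟨p, hp0, hp1, fun γ hγ => ?_⟩
  exact (hΓhomeo γ hγ).strictMono.eqOn_of_mapsTo hfin (hmaps γ hγ) hp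

theorem stmt15 (Γ : Subgroup IntervalMap) (hΓhomeo : HomeoSubgroup Γ)
    (hΓfix : FinFix Γ) (hΓirr : Irred Γ)
    (N : Subgroup IntervalMap) (hNsub : N ≤ Γ) (hNnt : N ≠ ⊥)
    (hNab : ∀ a ∈ N, ∀ b ∈ N, a * b = b * a)
    (hNnorm : ∀ g ∈ Γ, ∀ n ∈ N, g * n * g⁻¹ ∈ N) :
    ∀ g ∈ N, g ≠ 1 → FixPts g = ∅ :=
  stmt15_general Γ hΓhomeo hΓfix hΓirr N hNsub hNab hNnorm

end
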